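/- arXiv:2410.07623 — 3 statements merged into one kernel-verified Lean document; each statement's English description precedes it below -/
import Mathlib

section
/- Let (V, e) be an order unit space and let u ∈ V⁺ with ‖u‖ = 1 = ‖e − u‖. Then the following statements are equivalent: (1) both u and e − u have the order unit property in V; (2) for every v ∈ V with −u ≤ v ≤ u and every w ∈ V with −(e − u) ≤ w ≤ e − u, one has v ⊥∞ w; (3) u ⊥∞ w for every w ∈ V with −(e − u) ≤ w ≤ e − u, and (e − u) ⊥∞ v for every v ∈ V with −u ≤ v ≤ u. -/
section OrderUnit

variable {V : Type*} [NormedAddCommGroup V] [NormedSpace ℝ V] [PartialOrder V]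

/-- `x` is ∞-orthogonal to `y`: `‖x + k y‖ = max {‖x‖, ‖k y‖}` for all `k ∈ ℝ`. -/
def PerpInf (x y : V) : Prop :=
  ∀ k : ℝ, ‖x + k • y‖ = max ‖x‖ ‖k • y‖

/-- The norm of `V` is the order unit norm determined by the order unit `e`:
for every `v` and every `λ ≥ 0`, `‖v‖ ≤ λ` iff `-λ e ≤ v ≤ λ e`. -/
def IsOrderUnitNorm (e : V) : Prop :=
  ∀ (v : V) (t : ℝ), 0 ≤ t → (‖v‖ ≤ t ↔ -(t • e) ≤ v ∧ v ≤ t • e)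

/-- `u` has the order unit property: whenever `λ u + v ≥ 0` and `λ u - v ≥ 0` for some
`λ > 0`, also `‖v‖ u + v ≥ 0` and `‖v‖ u - v ≥ 0`. -/
def HasOUP (u : V) : Prop :=
  ∀ v : V, (∃ l : ℝ, 0 < l ∧ 0 ≤ l • u + v ∧ 0 ≤ l • u - v) →
    0 ≤ ‖v‖ • u + v ∧ 0 ≤ ‖v‖ • u - v

end OrderUnit

/-!
Write `u' = e - u`, so that `u + u' = e`. If `u` and `u'` have the order unit property, then
`v ∈ [-u, u]` and `w ∈ [-u', u']` satisfy `-‖v‖ u ≤ v ≤ ‖v‖ u` and `-‖w‖ u' ≤ w ≤ ‖w‖ u'`; adding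
these and using `u + u' = e` gives `‖v ± w‖ ≤ max ‖v‖ ‖w‖`, and then `2v = (v + w) + (v - w)`,
`2w = (v + w) - (v - w)` force equality. Conversely, the order unit property of `u` only needs
`[-u, u]` to be `∞`-orthogonal to the single vector `u'`: for `x ∈ [-l u, l u]` this gives
`‖x + ‖x‖ u'‖ = ‖x‖`, hence `x + ‖x‖ u' ≤ ‖x‖ e = ‖x‖ u + ‖x‖ u'`, i.e. `x ≤ ‖x‖ u`.
So (2) ⇒ (3) ⇒ (1) ⇒ (2).
-/

open Set

theorem max_norm_le_norm_add_add_norm_sub_div_two {E : Type*} [SeminormedAddCommGroup E]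
    [NormedSpace ℝ E] (x y : E) : max ‖x‖ ‖y‖ ≤ (‖x + y‖ + ‖x - y‖) / 2 := by
  have hx : ‖(2 : ℝ) • x‖ ≤ ‖x + y‖ + ‖x - y‖ := by
    rw [show (2 : ℝ) • x = (x + y) + (x - y) by module]
    exact norm_add_le _ _
  have hy : ‖(2 : ℝ) • y‖ ≤ ‖x + y‖ + ‖x - y‖ := by
    rw [show (2 : ℝ) • y = (x + y) - (x - y) by module]
    exact norm_sub_le _ _
  rw [norm_smul, Real.norm_two] at hx hy
  exact max_le (by linarith) (by linarith)

namespace PerpInf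

variable {V : Type*} [NormedAddCommGroup V] [NormedSpace ℝ V]

theorem of_norm_add_smul_le {x y : V} (h : ∀ k : ℝ, ‖x + k • y‖ ≤ max ‖x‖ ‖k • y‖) :
    PerpInf x y := by
  intro k
  have hsub : ‖x - k • y‖ ≤ max ‖x‖ ‖k • y‖ := by
    simpa [neg_smul, ← sub_eq_add_neg] using h (-k)
  have := max_norm_le_norm_add_add_norm_sub_div_two x (k • y)
  exact le_antisymm (h k) (by linarith)

theorem smul_left {x y : V} (h : PerpInf x y) (c : ℝ) : PerpInf (c • x) y := by
  intro k
  rcases eq_or_ne c 0 with rfl | hc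
  · simp
  calc ‖c • x + k • y‖ = ‖c • (x + (k / c) • y)‖ := by
        rw [smul_add, smul_smul, mul_div_cancel₀ _ hc]
    _ = max ‖c • x‖ ‖k • y‖ := by
        rw [norm_smul, h, mul_max_of_nonneg _ _ (norm_nonneg c), ← norm_smul, ← norm_smul,
          smul_smul, mul_div_cancel₀ _ hc]

theorem symm {x y : V} (h : PerpInf x y) : PerpInf y x := by
  intro k
  simpa [add_comm, max_comm] using h.smul_left k 1

end PerpInf

theorem smul_mem_Icc_abs_smul {V : Type*} [AddCommGroup V] [PartialOrder V]
    [IsOrderedAddMonoid V] [Module ℝ V] [PosSMulMono ℝ V] {u w : V} (hw : w ∈ Icc (-u) u)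
    (k : ℝ) : k • w ∈ Icc (-(|k| • u)) (|k| • u) := by
  rcases le_or_gt 0 k with hk | hk
  · rw [abs_of_nonneg hk, ← smul_neg]
    exact ⟨smul_le_smul_of_nonneg_left hw.1 hk, smul_le_smul_of_nonneg_left hw.2 hk⟩
  · rw [abs_of_neg hk, neg_smul, neg_neg]
    exact ⟨smul_le_smul_of_nonpos_left hw.2 hk.le,
      by simpa using smul_le_smul_of_nonpos_left hw.1 hk.le⟩

section OrderUnitSpace

variable {V : Type*} [NormedAddCommGroup V] [NormedSpace ℝ V] [PartialOrder V]
  [IsOrderedAddMonoid V] {e u u' : V}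

theorem HasOUP.mem_Icc_norm_smul (hOUP : HasOUP u) (hu : 0 ≤ u) {t : ℝ} (ht : 0 ≤ t) {v : V}
    (hv : v ∈ Icc (-(t • u)) (t • u)) : v ∈ Icc (-(‖v‖ • u)) (‖v‖ • u) := by
  have h₁ : 0 ≤ (t + 1) • u + v := by
    rw [add_smul, one_smul, add_right_comm]
    exact add_nonneg (neg_le_iff_add_nonneg'.1 hv.1) hu
  have h₂ : 0 ≤ (t + 1) • u - v := by
    rw [add_smul, one_smul, add_sub_right_comm]
    exact add_nonneg (sub_nonneg.2 hv.2) hu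
  obtain ⟨h₁', h₂'⟩ := hOUP v ⟨t + 1, by positivity, h₁, h₂⟩
  exact ⟨neg_le_iff_add_nonneg'.2 h₁', sub_nonneg.1 h₂'⟩

variable [PosSMulMono ℝ V]

theorem norm_add_le_max_of_mem_Icc (hnorm : IsOrderUnitNorm e) (hsum : u + u' = e)
    (hu : 0 ≤ u) (hu' : 0 ≤ u') {a b : ℝ} (ha : 0 ≤ a) {x y : V}
    (hx : x ∈ Icc (-(a • u)) (a • u)) (hy : y ∈ Icc (-(b • u')) (b • u')) :
    ‖x + y‖ ≤ max a b := by
  have hM : a • u + b • u' ≤ max a b • e := by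
    rw [← hsum, smul_add]
    exact add_le_add (smul_le_smul_of_nonneg_right (le_max_left a b) hu)
      (smul_le_smul_of_nonneg_right (le_max_right a b) hu')
  refine (hnorm _ _ (ha.trans (le_max_left a b))).2 ⟨?_, (add_le_add hx.2 hy.2).trans hM⟩
  calc -(max a b • e) ≤ -(a • u + b • u') := neg_le_neg hM
    _ = -(a • u) + -(b • u') := neg_add _ _
    _ ≤ x + y := add_le_add hx.1 hy.1

theorem perpInf_of_hasOUP (hnorm : IsOrderUnitNorm e) (hsum : u + u' = e) (hu : 0 ≤ u)
    (hu' : 0 ≤ u') (hOUP : HasOUP u) (hOUP' : HasOUP u') {v w : V} (hv : v ∈ Icc (-u) u)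
    (hw : w ∈ Icc (-u') u') : PerpInf v w := by
  refine PerpInf.of_norm_add_smul_le fun k => ?_
  have hv' := hOUP.mem_Icc_norm_smul hu zero_le_one (by simpa using hv)
  have hkw := hOUP'.mem_Icc_norm_smul hu' (abs_nonneg k) (smul_mem_Icc_abs_smul hw k)
  exact norm_add_le_max_of_mem_Icc hnorm hsum hu hu' (norm_nonneg v) hv' hkw

theorem le_norm_smul_of_perpInf (hnorm : IsOrderUnitNorm e) (hsum : u + u' = e)
    (hnu' : ‖u'‖ = 1) (hperp : ∀ v ∈ Icc (-u) u, PerpInf v u') {l : ℝ} (hl : 0 < l) {x : V}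
    (hx : x ∈ Icc (-(l • u)) (l • u)) : x ≤ ‖x‖ • u := by
  have hx' : PerpInf x u' := by
    have hxu : l⁻¹ • x ∈ Icc (-u) u := by
      simpa [abs_of_pos hl, smul_smul, hl.ne'] using smul_mem_Icc_abs_smul hx l⁻¹
    simpa [smul_smul, hl.ne'] using (hperp _ hxu).smul_left l
  have h : ‖x + ‖x‖ • u'‖ ≤ ‖x‖ := by
    rw [hx' ‖x‖, norm_smul, hnu', norm_norm, mul_one, max_self]
  have := ((hnorm _ _ (norm_nonneg x)).1 h).2
  rwa [← hsum, smul_add, add_le_add_iff_right] at this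

theorem hasOUP_of_perpInf (hnorm : IsOrderUnitNorm e) (hsum : u + u' = e) (hnu' : ‖u'‖ = 1)
    (hperp : ∀ v ∈ Icc (-u) u, PerpInf v u') : HasOUP u := by
  rintro v ⟨l, hl, h₁, h₂⟩
  have hv : v ∈ Icc (-(l • u)) (l • u) := ⟨neg_le_iff_add_nonneg'.2 h₁, sub_nonneg.1 h₂⟩
  have hnv : -v ∈ Icc (-(l • u)) (l • u) := ⟨neg_le_neg hv.2, neg_le.1 hv.1⟩
  refine ⟨?_, sub_nonneg.2 (le_norm_smul_of_perpInf hnorm hsum hnu' hperp hl hv)⟩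
  have := le_norm_smul_of_perpInf hnorm hsum hnu' hperp hl hnv
  rwa [norm_neg, neg_le_iff_add_nonneg] at this

end OrderUnitSpace

theorem orderProjection_tfae_general {V : Type*} [NormedAddCommGroup V] [NormedSpace ℝ V]
    [PartialOrder V]
    (hadd : ∀ a b c : V, b ≤ c → a + b ≤ a + c)
    (hsmul : ∀ (t : ℝ) (v : V), 0 ≤ t → 0 ≤ v → 0 ≤ t • v)
    (e : V) (hnorm : IsOrderUnitNorm e)
    (u : V) (hu : 0 ≤ u) (hnu : ‖u‖ = 1) (hneu : ‖e - u‖ = 1) :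
    ((HasOUP u ∧ HasOUP (e - u)) ↔
        (∀ v : V, -u ≤ v → v ≤ u →
          ∀ w : V, -(e - u) ≤ w → w ≤ e - u → PerpInf v w)) ∧
    ((∀ v : V, -u ≤ v → v ≤ u →
          ∀ w : V, -(e - u) ≤ w → w ≤ e - u → PerpInf v w) ↔
        ((∀ w : V, -(e - u) ≤ w → w ≤ e - u → PerpInf u w) ∧
          (∀ v : V, -u ≤ v → v ≤ u → PerpInf (e - u) v))) := by
  have : IsOrderedAddMonoid V :=
    { add_le_add_left := fun a b h c => by simpa only [add_comm _ c] using hadd c a b h }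
  have : PosSMulMono ℝ V := PosSMulMono.of_smul_nonneg fun t ht v hv => hsmul t v ht hv
  have hsum : u + (e - u) = e := add_sub_cancel u e
  have hu' : 0 ≤ e - u := sub_nonneg.2 (by simpa using ((hnorm u 1 zero_le_one).1 hnu.le).2)
  have perp_of_oup : HasOUP u ∧ HasOUP (e - u) → ∀ v : V, -u ≤ v → v ≤ u →
      ∀ w : V, -(e - u) ≤ w → w ≤ e - u → PerpInf v w := fun ⟨h, h'⟩ v hv₁ hv₂ w hw₁ hw₂ =>
    perpInf_of_hasOUP hnorm hsum hu hu' h h' ⟨hv₁, hv₂⟩ ⟨hw₁, hw₂⟩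
  have oup_of_perp : (∀ w : V, -(e - u) ≤ w → w ≤ e - u → PerpInf u w) →
      (∀ v : V, -u ≤ v → v ≤ u → PerpInf (e - u) v) → HasOUP u ∧ HasOUP (e - u) := fun h h' =>
    ⟨hasOUP_of_perpInf hnorm hsum hneu fun v hv => (h' v hv.1 hv.2).symm,
      hasOUP_of_perpInf hnorm (sub_add_cancel e u) hnu fun w hw => (h w hw.1 hw.2).symm⟩
  have restrict (h : ∀ v : V, -u ≤ v → v ≤ u → ∀ w : V, -(e - u) ≤ w → w ≤ e - u →
      PerpInf v w) :
      (∀ w : V, -(e - u) ≤ w → w ≤ e - u → PerpInf u w) ∧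
        (∀ v : V, -u ≤ v → v ≤ u → PerpInf (e - u) v) :=
    ⟨h u (neg_le_self hu) le_rfl, fun v hv₁ hv₂ => (h v hv₁ hv₂ _ (neg_le_self hu') le_rfl).symm⟩
  exact ⟨⟨perp_of_oup, fun h => oup_of_perp (restrict h).1 (restrict h).2⟩,
    ⟨restrict, fun h => perp_of_oup (oup_of_perp h.1 h.2)⟩⟩

theorem orderProjection_tfae {V : Type*} [NormedAddCommGroup V] [NormedSpace ℝ V]
    [PartialOrder V]
    (hadd : ∀ a b c : V, b ≤ c → a + b ≤ a + c)
    (hsmul : ∀ (t : ℝ) (v : V), 0 ≤ t → 0 ≤ v → 0 ≤ t • v)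
    (e : V) (he : 0 ≤ e) (hnorm : IsOrderUnitNorm e)
    (u : V) (hu : 0 ≤ u) (hnu : ‖u‖ = 1) (hneu : ‖e - u‖ = 1) :
    ((HasOUP u ∧ HasOUP (e - u)) ↔
        (∀ v : V, -u ≤ v → v ≤ u →
          ∀ w : V, -(e - u) ≤ w → w ≤ e - u → PerpInf v w)) ∧
    ((∀ v : V, -u ≤ v → v ≤ u →
          ∀ w : V, -(e - u) ≤ w → w ≤ e - u → PerpInf v w) ↔
        ((∀ w : V, -(e - u) ≤ w → w ≤ e - u → PerpInf u w) ∧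
          (∀ v : V, -u ≤ v → v ≤ u → PerpInf (e - u) v))) :=
  orderProjection_tfae_general hadd hsmul e hnorm u hu hnu hneu
end

section
/- Let (V, e) be an order unit space and let u, v, w ∈ V⁺ with ‖u‖ = ‖v‖ = ‖w‖ = 1 = ‖e − u‖ = ‖e − v‖ = ‖e − w‖ and u = v + w, and suppose u has the order unit property in V. Then v and w both have the order unit property in V if and only if v is extensively ∞-orthogonal to w, i.e., v₁ ⊥∞ w₁ for every v₁ ∈ V with −v ≤ v₁ ≤ v and every w₁ ∈ V with −w ≤ w₁ ≤ w. -/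
/-!
If `v + w ≤ e` and `x`, `y` are dominated by `‖x‖ v` and `‖y‖ w` respectively, then `x ± y` is
dominated by `max ‖x‖ ‖y‖ • e`, so `‖x ± y‖ ≤ max ‖x‖ ‖y‖`; writing `2x` and `2y` as the sum and
difference of `x + y` and `x - y` gives the reverse inequality. The order unit property of `v`
and `w` provides exactly these dominations, whence ∞-orthogonality. Conversely, if every
`x ∈ [-v, v]` is ∞-orthogonal to `w` (with `‖w‖ ≤ 1`), then `x ± ‖x‖ w` has norm `‖x‖`, and the
order unit property of `u = v + w` applied to these elements bounds `x` by `‖x‖ v`.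
-/

open Set

section

variable {V : Type*} [NormedAddCommGroup V] [NormedSpace ℝ V]

theorem PerpInf.smul_left_s9 {x y : V} (h : PerpInf x y) (a : ℝ) : PerpInf (a • x) y := by
  intro k
  rcases eq_or_ne a 0 with rfl | ha
  · simp
  calc ‖a • x + k • y‖ = ‖a‖ * ‖x + (k / a) • y‖ := by
        rw [← norm_smul, smul_add, smul_smul, mul_div_cancel₀ _ ha]
    _ = max ‖a • x‖ ‖k • y‖ := by
        rw [h, mul_max_of_nonneg _ _ (norm_nonneg a), ← norm_smul, ← norm_smul, smul_smul,
          mul_div_cancel₀ _ ha]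

theorem PerpInf.symm_s9 {x y : V} (h : PerpInf x y) : PerpInf y x := by
  intro k
  simpa [add_comm, max_comm] using h.smul_left_s9 k 1

variable [PartialOrder V]

theorem IsOrderUnitNorm.le_of_norm_le_one {e u : V} (he : IsOrderUnitNorm e) (hu : ‖u‖ ≤ 1) :
    u ≤ e := by
  simpa using ((he u 1 zero_le_one).mp hu).2

variable [IsOrderedAddMonoid V]

theorem hasOUP_iff {u : V} : HasOUP u ↔
    ∀ x, (∃ l : ℝ, 0 < l ∧ x ∈ Icc (-(l • u)) (l • u)) → x ∈ Icc (-(‖x‖ • u)) (‖x‖ • u) := by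
  simp only [HasOUP, mem_Icc, neg_le_iff_add_nonneg', sub_nonneg]

theorem HasOUP.mem_Icc_norm_smul_s9 {u x : V} {l : ℝ} (hu : HasOUP u) (hl : 0 ≤ l)
    (hx : x ∈ Icc (-(l • u)) (l • u)) : x ∈ Icc (-(‖x‖ • u)) (‖x‖ • u) := by
  rcases hl.eq_or_lt with rfl | hl
  · obtain rfl : x = 0 := le_antisymm (by simpa using hx.2) (by simpa using hx.1)
    simp
  · exact hasOUP_iff.mp hu x ⟨l, hl, hx⟩

variable [PosSMulMono ℝ V]

theorem smul_mem_Icc_abs_smul_s9 {u x : V} (hx : x ∈ Icc (-u) u) (c : ℝ) :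
    c • x ∈ Icc (-(|c| • u)) (|c| • u) := by
  rcases le_total 0 c with hc | hc
  · rw [abs_of_nonneg hc, ← smul_neg]
    exact ⟨smul_le_smul_of_nonneg_left hx.1 hc, smul_le_smul_of_nonneg_left hx.2 hc⟩
  · rw [abs_of_nonpos hc, ← neg_smul_neg c x, ← smul_neg]
    have hc' : 0 ≤ -c := neg_nonneg.mpr hc
    exact ⟨smul_le_smul_of_nonneg_left (neg_le_neg hx.2) hc',
      smul_le_smul_of_nonneg_left (neg_le.mp hx.1) hc'⟩

theorem add_mem_Icc_max_smul {v w x y : V} {a b : ℝ} (hv : 0 ≤ v) (hw : 0 ≤ w)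
    (hx : x ∈ Icc (-(a • v)) (a • v)) (hy : y ∈ Icc (-(b • w)) (b • w)) :
    x + y ∈ Icc (-(max a b • (v + w))) (max a b • (v + w)) := by
  have hle : a • v + b • w ≤ max a b • (v + w) := by
    rw [smul_add]
    exact add_le_add (smul_le_smul_of_nonneg_right (le_max_left a b) hv)
      (smul_le_smul_of_nonneg_right (le_max_right a b) hw)
  refine ⟨(neg_le_neg hle).trans ?_, (add_le_add hx.2 hy.2).trans hle⟩
  rw [neg_add]
  exact add_le_add hx.1 hy.1

theorem norm_add_le_max_of_mem_Icc_s9 {e v w x y : V} (he : IsOrderUnitNorm e) (hv : 0 ≤ v)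
    (hw : 0 ≤ w) (hvw : v + w ≤ e) (hx : x ∈ Icc (-(‖x‖ • v)) (‖x‖ • v))
    (hy : y ∈ Icc (-(‖y‖ • w)) (‖y‖ • w)) : ‖x + y‖ ≤ max ‖x‖ ‖y‖ := by
  have hM : 0 ≤ max ‖x‖ ‖y‖ := le_max_of_le_left (norm_nonneg x)
  have hle := smul_le_smul_of_nonneg_left hvw hM
  exact (he _ _ hM).mpr
    (Icc_subset_Icc (neg_le_neg hle) hle (add_mem_Icc_max_smul hv hw hx hy))

theorem norm_add_eq_max_of_mem_Icc {e v w x y : V} (he : IsOrderUnitNorm e) (hv : 0 ≤ v)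
    (hw : 0 ≤ w) (hvw : v + w ≤ e) (hx : x ∈ Icc (-(‖x‖ • v)) (‖x‖ • v))
    (hy : y ∈ Icc (-(‖y‖ • w)) (‖y‖ • w)) : ‖x + y‖ = max ‖x‖ ‖y‖ := by
  refine (norm_add_le_max_of_mem_Icc_s9 he hv hw hvw hx hy).antisymm ?_
  have hy' : -y ∈ Icc (-(‖-y‖ • w)) (‖-y‖ • w) := by
    rw [norm_neg]
    exact ⟨neg_le_neg hy.2, neg_le.mp hy.1⟩
  have hsub : ‖x - y‖ ≤ max ‖x‖ ‖y‖ := by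
    simpa [sub_eq_add_neg] using norm_add_le_max_of_mem_Icc_s9 he hv hw hvw hx hy'
  have h2x := norm_add_le (x + y) (x - y)
  have h2y := norm_sub_le (x + y) (x - y)
  rw [show x + y + (x - y) = (2 : ℝ) • x by module, norm_smul, Real.norm_ofNat] at h2x
  rw [show x + y - (x - y) = (2 : ℝ) • y by module, norm_smul, Real.norm_ofNat] at h2y
  rcases max_choice ‖x‖ ‖y‖ with h | h <;> rw [h] at hsub ⊢ <;>
    linarith [le_max_left ‖x‖ ‖y‖, le_max_right ‖x‖ ‖y‖]

theorem perpInf_of_hasOUP_s9 {e v w x y : V} (he : IsOrderUnitNorm e) (hv : 0 ≤ v) (hw : 0 ≤ w)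
    (hvw : v + w ≤ e) (hOv : HasOUP v) (hOw : HasOUP w) (hx : x ∈ Icc (-v) v)
    (hy : y ∈ Icc (-w) w) : PerpInf x y := fun k =>
  norm_add_eq_max_of_mem_Icc he hv hw hvw (hOv.mem_Icc_norm_smul_s9 zero_le_one (by simpa using hx))
    (hOw.mem_Icc_norm_smul_s9 (abs_nonneg k) (smul_mem_Icc_abs_smul_s9 hy k))

theorem HasOUP.of_add_of_perpInf {v w : V} (hu : HasOUP (v + w)) (hv : 0 ≤ v) (hw : 0 ≤ w)
    (hw1 : ‖w‖ ≤ 1) (h : ∀ x ∈ Icc (-v) v, PerpInf x w) : HasOUP v := by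
  rw [hasOUP_iff] at hu ⊢
  rintro x ⟨l, hl, hx⟩
  have hperp : PerpInf x w := by
    have hx' : l⁻¹ • x ∈ Icc (-v) v := by
      simpa [abs_of_pos hl, smul_smul, hl.ne'] using smul_mem_Icc_abs_smul_s9 hx l⁻¹
    simpa [smul_smul, hl.ne'] using (h _ hx').smul_left_s9 l
  have key : ∀ c : ℝ, |c| = ‖x‖ → x + c • w ∈ Icc (-(‖x‖ • (v + w))) (‖x‖ • (v + w)) := by
    intro c hc
    have hcw : c • w ∈ Icc (-(‖x‖ • w)) (‖x‖ • w) :=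
      hc ▸ smul_mem_Icc_abs_smul_s9 ⟨neg_le_self hw, le_rfl⟩ c
    have hnorm : ‖x + c • w‖ = ‖x‖ := by
      rw [hperp c, norm_smul, Real.norm_eq_abs, hc,
        max_eq_left (mul_le_of_le_one_right (norm_nonneg x) hw1)]
    simpa [hnorm] using hu (x + c • w) ⟨max l ‖x‖, lt_max_of_lt_left hl,
      add_mem_Icc_max_smul hv hw hx hcw⟩
  have hlow := (key (-‖x‖) (by simp)).1
  have hupp := (key ‖x‖ (abs_norm x)).2
  rw [smul_add, neg_add, neg_smul, ← sub_eq_add_neg, ← sub_eq_add_neg] at hlow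
  rw [smul_add] at hupp
  exact ⟨(sub_le_sub_iff_right _).mp hlow, le_of_add_le_add_right hupp⟩

end

theorem hasOUP_sum_iff_general {V : Type*} [NormedAddCommGroup V] [NormedSpace ℝ V]
    [PartialOrder V]
    (hadd : ∀ a b c : V, b ≤ c → a + b ≤ a + c)
    (hsmul : ∀ (t : ℝ) (v : V), 0 ≤ t → 0 ≤ v → 0 ≤ t • v)
    (e : V) (hnorm : IsOrderUnitNorm e)
    (u v w : V) (hv : 0 ≤ v) (hw : 0 ≤ w)
    (hnu : ‖u‖ = 1) (hnv : ‖v‖ = 1) (hnw : ‖w‖ = 1)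
    (huvw : u = v + w) (hOUP : HasOUP u) :
    (HasOUP v ∧ HasOUP w) ↔
      (∀ v₁ : V, -v ≤ v₁ → v₁ ≤ v → ∀ w₁ : V, -w ≤ w₁ → w₁ ≤ w → PerpInf v₁ w₁) := by
  have : IsOrderedAddMonoid V :=
    ⟨fun a b h c => by rw [add_comm a, add_comm b]; exact hadd c a b h,
      fun a b h c => hadd c a b h⟩
  have : PosSMulMono ℝ V := PosSMulMono.of_smul_nonneg fun t ht x hx => hsmul t x ht hx
  subst huvw
  have hvw : v + w ≤ e := hnorm.le_of_norm_le_one hnu.le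
  constructor
  · rintro ⟨hOv, hOw⟩ v₁ hv₁ hv₁' w₁ hw₁ hw₁'
    exact perpInf_of_hasOUP_s9 hnorm hv hw hvw hOv hOw ⟨hv₁, hv₁'⟩ ⟨hw₁, hw₁'⟩
  · intro h
    refine ⟨hOUP.of_add_of_perpInf hv hw hnw.le fun x hx => ?_,
      (add_comm v w ▸ hOUP).of_add_of_perpInf hw hv hnv.le fun y hy => ?_⟩
    · exact h x hx.1 hx.2 w (neg_le_self hw) le_rfl
    · exact (h v (neg_le_self hv) le_rfl y hy.1 hy.2).symm_s9

theorem hasOUP_sum_iff {V : Type*} [NormedAddCommGroup V] [NormedSpace ℝ V]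
    [PartialOrder V]
    (hadd : ∀ a b c : V, b ≤ c → a + b ≤ a + c)
    (hsmul : ∀ (t : ℝ) (v : V), 0 ≤ t → 0 ≤ v → 0 ≤ t • v)
    (e : V) (he : 0 ≤ e) (hnorm : IsOrderUnitNorm e)
    (u v w : V) (hu : 0 ≤ u) (hv : 0 ≤ v) (hw : 0 ≤ w)
    (hnu : ‖u‖ = 1) (hnv : ‖v‖ = 1) (hnw : ‖w‖ = 1)
    (hneu : ‖e - u‖ = 1) (hnev : ‖e - v‖ = 1) (hnew : ‖e - w‖ = 1)
    (huvw : u = v + w) (hOUP : HasOUP u) :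
    (HasOUP v ∧ HasOUP w) ↔
      (∀ v₁ : V, -v ≤ v₁ → v₁ ≤ v → ∀ w₁ : V, -w ≤ w₁ → w₁ ≤ w → PerpInf v₁ w₁) :=
  hasOUP_sum_iff_general hadd hsmul e hnorm u v w hv hw hnu hnv hnw huvw hOUP
end

section
/- Let (V, e) be an order unit space and let u ∈ V⁺ with ‖u‖ = 1 = ‖e − u‖ be an order projection in V. If v ∈ V satisfies λ u + v ∈ V⁺ and λ u − v ∈ V⁺ for some λ > 0, and w ∈ V satisfies μ (e − u) + w ∈ V⁺ and μ (e − u) − w ∈ V⁺ for some μ > 0, then ‖v + w‖ = max{‖v‖, ‖w‖}. -/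
/-!
The upper bound holds because `±(v + w) ≤ ‖v‖ u + ‖w‖ (e - u) ≤ max ‖v‖ ‖w‖ • e`.

For `‖v‖ ≤ ‖v + w‖`, replace `v, w` by `-v, -w` if necessary so that `v ≰ t e` for all
`t < ‖v‖`. Separating `v` from the open convex set `{y | ∃ t < ‖v‖, y ≤ t e}` gives a positive
functional `g` with `g e ≤ 1` and `g v = ‖v‖`. Then `‖v‖ u - v ≥ 0` forces `g u ≥ 1`, hence
`g (e - u) = 0`, hence `g w = 0` because `w` lies in the order ideal of `e - u`, and
`‖v + w‖ ≥ g (v + w) = ‖v‖`.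
-/

namespace IsOrderUnitNorm

variable {V : Type*} [NormedAddCommGroup V] [NormedSpace ℝ V] [PartialOrder V] {e : V}

theorem le_norm_smul (hnorm : IsOrderUnitNorm e) (y : V) : y ≤ ‖y‖ • e :=
  ((hnorm y _ (norm_nonneg y)).1 le_rfl).2

theorem apply_le_norm [IsOrderedAddMonoid V] (hnorm : IsOrderUnitNorm e) {g : V →L[ℝ] ℝ}
    (hg : ∀ z, 0 ≤ z → 0 ≤ g z) (hge : g e ≤ 1) (y : V) : g y ≤ ‖y‖ := by
  have h := hg _ (sub_nonneg.2 (hnorm.le_norm_smul y))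
  rw [map_sub, map_smul, smul_eq_mul] at h
  nlinarith [norm_nonneg y]

theorem exists_nonneg_functional [IsOrderedAddMonoid V] [PosSMulMono ℝ V]
    (hnorm : IsOrderUnitNorm e) {x : V} {r : ℝ} (hr : 0 < r) (hx : ∀ t < r, ¬ x ≤ t • e) :
    ∃ g : V →L[ℝ] ℝ, (∀ z, 0 ≤ z → 0 ≤ g z) ∧ g e ≤ 1 ∧ g x = r := by
  set s : Set V := {y | ∃ t < r, y ≤ t • e}
  have hs₀ : (0 : V) ∈ s := ⟨0, hr, by rw [zero_smul]⟩
  have hs_convex : Convex ℝ s := by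
    rintro y₁ ⟨t₁, ht₁, hy₁⟩ y₂ ⟨t₂, ht₂, hy₂⟩ a b ha hb hab
    refine ⟨a * t₁ + b * t₂, convex_Iio r ht₁ ht₂ ha hb hab, ?_⟩
    calc a • y₁ + b • y₂ ≤ a • (t₁ • e) + b • (t₂ • e) :=
          add_le_add (smul_le_smul_of_nonneg_left hy₁ ha) (smul_le_smul_of_nonneg_left hy₂ hb)
      _ = (a * t₁ + b * t₂) • e := by module
  have hs_open : IsOpen s := by
    refine Metric.isOpen_iff.2 fun y ⟨t, ht, hy⟩ => ⟨r - t, sub_pos.2 ht, fun z hz => ?_⟩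
    rw [Metric.mem_ball, dist_eq_norm] at hz
    refine ⟨t + ‖z - y‖, by linarith, ?_⟩
    calc z = y + (z - y) := (add_sub_cancel y z).symm
      _ ≤ t • e + ‖z - y‖ • e := add_le_add hy (hnorm.le_norm_smul _)
      _ = (t + ‖z - y‖) • e := (add_smul _ _ _).symm
  obtain ⟨f, hfx, hfs⟩ :=
    separate_convex_open_set hs₀ hs_convex hs_open fun ⟨t, ht, hxt⟩ => hx t ht hxt
  have hf_nonneg : ∀ z, 0 ≤ z → 0 ≤ f z := by
    -- otherwise `(f z)⁻¹ • z ≤ 0` would be a point of `s` where `f` equals `1`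
    intro z hz
    by_contra! hfz
    have hmem : (f z)⁻¹ • z ∈ s :=
      ⟨0, hr, by rw [zero_smul]; exact smul_nonpos_of_nonpos_of_nonneg (inv_nonpos.2 hfz.le) hz⟩
    have h := hfs _ hmem
    rw [map_smul, smul_eq_mul, inv_mul_cancel₀ hfz.ne] at h
    exact h.false
  have hfe : r * f e ≤ 1 := by
    -- otherwise `(f e)⁻¹ • e` would be a point of `s` where `f` equals `1`
    by_contra! hfe
    have hfe₀ : 0 < f e := pos_of_mul_pos_right (one_pos.trans hfe) hr.le
    have hmem : (f e)⁻¹ • e ∈ s :=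
      ⟨(f e)⁻¹, (inv_lt_iff_one_lt_mul₀ hfe₀).2 hfe, le_rfl⟩
    have h := hfs _ hmem
    rw [map_smul, smul_eq_mul, inv_mul_cancel₀ hfe₀.ne'] at h
    exact h.false
  exact ⟨r • f, fun z hz => smul_nonneg hr.le (hf_nonneg z hz), hfe, by simp [hfx]⟩

theorem forall_not_le_or_forall_not_neg_le [IsOrderedAddMonoid V] [PosSMulMono ℝ V]
    (hnorm : IsOrderUnitNorm e) (he : 0 ≤ e) {v : V} (hv : v ≠ 0) :
    (∀ t < ‖v‖, ¬ v ≤ t • e) ∨ ∀ t < ‖v‖, ¬ -v ≤ t • e := by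
  by_contra! h
  obtain ⟨⟨t₁, ht₁, h₁⟩, t₂, ht₂, h₂⟩ := h
  set t := max (max t₁ t₂) 0
  have ht : t < ‖v‖ := max_lt (max_lt ht₁ ht₂) (norm_pos_iff.2 hv)
  have h₁' : v ≤ t • e :=
    h₁.trans (smul_le_smul_of_nonneg_right ((le_max_left _ _).trans (le_max_left _ _)) he)
  have h₂' : -v ≤ t • e :=
    h₂.trans (smul_le_smul_of_nonneg_right ((le_max_right _ _).trans (le_max_left _ _)) he)
  exact ht.not_ge ((hnorm v t (le_max_right _ _)).2 ⟨neg_le.1 h₂', h₁'⟩)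

theorem norm_le_norm_add_of_forall_not_le [IsOrderedAddMonoid V] [PosSMulMono ℝ V]
    (hnorm : IsOrderUnitNorm e) {u u' v w : V} (hu' : 0 ≤ u') (huu' : u + u' = e)
    (hv₀ : 0 < ‖v‖) (hv : ∀ t < ‖v‖, ¬ v ≤ t • e) (hvu : 0 ≤ ‖v‖ • u - v) {m : ℝ}
    (hw : 0 ≤ m • u' + w ∧ 0 ≤ m • u' - w) :
    ‖v‖ ≤ ‖v + w‖ := by
  obtain ⟨g, hg, hge, hgv⟩ := hnorm.exists_nonneg_functional hv₀ hv
  have hgu : 1 ≤ g u := by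
    have h := hg _ hvu
    rw [map_sub, map_smul, hgv, smul_eq_mul] at h
    nlinarith
  have hgu' : g u' = 0 := by
    have h : g u + g u' = g e := by rw [← map_add, huu']
    linarith [hg _ hu']
  have hgw : g w = 0 := by
    have h₁ := hg _ hw.1
    have h₂ := hg _ hw.2
    rw [map_add, map_smul, hgu', smul_zero, zero_add] at h₁
    rw [map_sub, map_smul, hgu', smul_zero, zero_sub, neg_nonneg] at h₂
    exact le_antisymm h₂ h₁
  calc ‖v‖ = g (v + w) := by rw [map_add, hgv, hgw, add_zero]
    _ ≤ ‖v + w‖ := hnorm.apply_le_norm hg hge _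

theorem norm_le_norm_add [IsOrderedAddMonoid V] [PosSMulMono ℝ V]
    (hnorm : IsOrderUnitNorm e) (he : 0 ≤ e) {u u' v w : V} (hu' : 0 ≤ u') (huu' : u + u' = e)
    (hv : 0 ≤ ‖v‖ • u + v ∧ 0 ≤ ‖v‖ • u - v) {m : ℝ} (hw : 0 ≤ m • u' + w ∧ 0 ≤ m • u' - w) :
    ‖v‖ ≤ ‖v + w‖ := by
  rcases eq_or_ne v 0 with rfl | hv₀
  · simp
  rcases hnorm.forall_not_le_or_forall_not_neg_le he hv₀ with hsign | hsign
  · exact hnorm.norm_le_norm_add_of_forall_not_le hu' huu' (norm_pos_iff.2 hv₀) hsign hv.2 hw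
  · have hw' : 0 ≤ m • u' + -w ∧ 0 ≤ m • u' - -w := by
      rwa [← sub_eq_add_neg, sub_neg_eq_add, and_comm]
    have hvu : 0 ≤ ‖-v‖ • u - -v := by rw [norm_neg, sub_neg_eq_add]; exact hv.1
    have h := hnorm.norm_le_norm_add_of_forall_not_le hu' huu'
      (norm_pos_iff.2 (neg_ne_zero.2 hv₀)) (by rwa [norm_neg]) hvu hw'
    rwa [norm_neg, ← neg_add, norm_neg] at h

theorem norm_add_le_max [IsOrderedAddMonoid V] [PosSMulMono ℝ V]
    (hnorm : IsOrderUnitNorm e) {u u' v w : V} (hu : 0 ≤ u) (hu' : 0 ≤ u') (huu' : u + u' = e)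
    (hv : 0 ≤ ‖v‖ • u + v ∧ 0 ≤ ‖v‖ • u - v) (hw : 0 ≤ ‖w‖ • u' + w ∧ 0 ≤ ‖w‖ • u' - w) :
    ‖v + w‖ ≤ max ‖v‖ ‖w‖ := by
  set M := max ‖v‖ ‖w‖
  have hMv : 0 ≤ (M - ‖v‖) • u := smul_nonneg (sub_nonneg.2 (le_max_left _ _)) hu
  have hMw : 0 ≤ (M - ‖w‖) • u' := smul_nonneg (sub_nonneg.2 (le_max_right _ _)) hu'
  refine (hnorm _ M ((norm_nonneg v).trans (le_max_left _ _))).2 ⟨?_, ?_⟩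
  · have h : M • e + (v + w) =
        (‖v‖ • u + v) + (‖w‖ • u' + w) + (M - ‖v‖) • u + (M - ‖w‖) • u' := by
      rw [← huu']; module
    rw [neg_le_iff_add_nonneg', h]
    exact add_nonneg (add_nonneg (add_nonneg hv.1 hw.1) hMv) hMw
  · have h : M • e - (v + w) =
        (‖v‖ • u - v) + (‖w‖ • u' - w) + (M - ‖v‖) • u + (M - ‖w‖) • u' := by
      rw [← huu']; module
    rw [← sub_nonneg, h]
    exact add_nonneg (add_nonneg (add_nonneg hv.2 hw.2) hMv) hMw

end IsOrderUnitNorm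

theorem orderProjection_norm_add_general {V : Type*} [NormedAddCommGroup V] [NormedSpace ℝ V]
    [PartialOrder V]
    (hadd : ∀ a b c : V, b ≤ c → a + b ≤ a + c)
    (hsmul : ∀ (t : ℝ) (v : V), 0 ≤ t → 0 ≤ v → 0 ≤ t • v)
    (e : V) (he : 0 ≤ e) (hnorm : IsOrderUnitNorm e)
    (u : V) (hu : 0 ≤ u) (hnu : ‖u‖ = 1)
    (hproj : HasOUP u ∧ HasOUP (e - u))
    (v w : V)
    (hv : ∃ l : ℝ, 0 < l ∧ 0 ≤ l • u + v ∧ 0 ≤ l • u - v)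
    (hw : ∃ m : ℝ, 0 < m ∧ 0 ≤ m • (e - u) + w ∧ 0 ≤ m • (e - u) - w) :
    ‖v + w‖ = max ‖v‖ ‖w‖ := by
  have : IsOrderedAddMonoid V :=
    { add_le_add_left := fun a b h c => by simpa only [add_comm _ c] using hadd c a b h }
  have : PosSMulMono ℝ V := PosSMulMono.of_smul_nonneg fun t ht v hv => hsmul t v ht hv
  have heu : 0 ≤ e - u := sub_nonneg.2 (by simpa using ((hnorm u 1 zero_le_one).1 hnu.le).2)
  have hvu := hproj.1 v hv
  have hwu := hproj.2 w hw
  obtain ⟨l, -, hvl⟩ := hv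
  obtain ⟨m, -, hwm⟩ := hw
  refine le_antisymm (hnorm.norm_add_le_max hu heu (add_sub_cancel u e) hvu hwu) (max_le ?_ ?_)
  · exact hnorm.norm_le_norm_add he heu (add_sub_cancel u e) hvu hwm
  · rw [add_comm]
    exact hnorm.norm_le_norm_add he hu (sub_add_cancel e u) hwu hvl

theorem orderProjection_norm_add {V : Type*} [NormedAddCommGroup V] [NormedSpace ℝ V]
    [PartialOrder V]
    (hadd : ∀ a b c : V, b ≤ c → a + b ≤ a + c)
    (hsmul : ∀ (t : ℝ) (v : V), 0 ≤ t → 0 ≤ v → 0 ≤ t • v)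
    (e : V) (he : 0 ≤ e) (hnorm : IsOrderUnitNorm e)
    (u : V) (hu : 0 ≤ u) (hnu : ‖u‖ = 1) (hneu : ‖e - u‖ = 1)
    (hproj : HasOUP u ∧ HasOUP (e - u))
    (v w : V)
    (hv : ∃ l : ℝ, 0 < l ∧ 0 ≤ l • u + v ∧ 0 ≤ l • u - v)
    (hw : ∃ m : ℝ, 0 < m ∧ 0 ≤ m • (e - u) + w ∧ 0 ≤ m • (e - u) - w) :
    ‖v + w‖ = max ‖v‖ ‖w‖ :=
  orderProjection_norm_add_general hadd hsmul e he hnorm u hu hnu hproj v w hv hw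
end
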